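/- Let A₀ be the precision matrix of a Gaussian graphical model and for each node i let θⁱ be the optimal prediction coefficients, so A₀_{ii'} = −θⁱ_{i'} A₀_{ii} for i' ≠ i. Let Ã₀ agree with A₀ on the diagonal and on entries in E ∩ Ê and vanish on off-diagonal entries outside Ê. If for each i the estimation error satisfies ‖θⁱ_{J̃} − θ̂ⁱ_{J̃}‖₂ ≤ c_i, where falsely rejected edges of node i lie in J̃ and θ̂ⁱ vanishes there, then ‖Ã₀ − A₀‖_F² ≤ Σᵢ A₀_{ii}² c_i². -/

import Mathlib

open Matrix

noncomputable def frobNorm {p : ℕ} (M : Matrix (Fin p) (Fin p) ℝ) : ℝ :=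
  Real.sqrt (∑ i, ∑ j, (M i j) ^ 2)

theorem frobNorm_sq {p : ℕ} (M : Matrix (Fin p) (Fin p) ℝ) :
    frobNorm M ^ 2 = ∑ i, ∑ j, M i j ^ 2 :=
  Real.sq_sqrt (by positivity)

/-- On a falsely rejected entry `y = -t d` is replaced by `x = 0` while `s = 0`, so
`x - y = (t - s) d`. -/
theorem sq_sub_le_of_eq_or_rejected {x y d t s : ℝ} (hy : y = -t * d)
    (h : x = y ∨ (x = 0 ∧ s = 0)) : (x - y) ^ 2 ≤ d ^ 2 * (t - s) ^ 2 := by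
  rcases h with rfl | ⟨rfl, rfl⟩
  · rw [sub_self, zero_pow two_ne_zero]
    positivity
  · rw [hy]
    exact le_of_eq (by ring)

theorem sq_sub_apply_le_of_regression {n : Type*} {A₀ Atil : Matrix n n ℝ}
    {θ θhat : n → n → ℝ} (hdiag : ∀ i, Atil i i = A₀ i i)
    (hreg : ∀ i i', i ≠ i' → A₀ i i' = -(θ i i') * A₀ i i)
    (hoff : ∀ i i', i ≠ i' → Atil i i' = A₀ i i' ∨ (Atil i i' = 0 ∧ θhat i i' = 0))
    (i j : n) : (Atil - A₀) i j ^ 2 ≤ A₀ i i ^ 2 * (θ i j - θhat i j) ^ 2 := by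
  rw [Matrix.sub_apply]
  by_cases hij : i = j
  · subst hij
    rw [hdiag, sub_self, zero_pow two_ne_zero]
    positivity
  · exact sq_sub_le_of_eq_or_rejected (hreg i j hij) (hoff i j hij)

/-- Bound on `‖Ã₀ − A₀‖_F²` in terms of the rowwise regression estimation
errors.  `θ i` is the vector of optimal prediction coefficients of node `i`,
`θhat i` its estimate; `Ã₀` agrees with `A₀` on the diagonal and on correctly
estimated edges, and vanishes on falsely rejected off-diagonal entries, where
the estimated coefficient is zero. -/
theorem stmt9 {p : ℕ} (A₀ Atil : Matrix (Fin p) (Fin p) ℝ)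
    (θ θhat : Fin p → Fin p → ℝ) (c : Fin p → ℝ)
    (hdiag : ∀ i, Atil i i = A₀ i i)
    (hreg : ∀ i i' : Fin p, i ≠ i' → A₀ i i' = -(θ i i') * A₀ i i)
    (hoff : ∀ i i' : Fin p, i ≠ i' →
      Atil i i' = A₀ i i' ∨ (Atil i i' = 0 ∧ θhat i i' = 0))
    (herr : ∀ i, Real.sqrt (∑ i', (θ i i' - θhat i i') ^ 2) ≤ c i) :
    frobNorm (Atil - A₀) ^ 2 ≤ ∑ i, (A₀ i i) ^ 2 * (c i) ^ 2 := by
  rw [frobNorm_sq]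
  refine Finset.sum_le_sum fun i _ => ?_
  calc ∑ j, (Atil - A₀) i j ^ 2
      ≤ ∑ j, A₀ i i ^ 2 * (θ i j - θhat i j) ^ 2 :=
        Finset.sum_le_sum fun j _ => sq_sub_apply_le_of_regression hdiag hreg hoff i j
    _ = A₀ i i ^ 2 * ∑ j, (θ i j - θhat i j) ^ 2 := Finset.mul_sum _ _ _ |>.symm
    _ ≤ A₀ i i ^ 2 * c i ^ 2 :=
        mul_le_mul_of_nonneg_left (Real.sqrt_le_iff.mp (herr i)).2 (sq_nonneg _)
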